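/- In a gradable arrowed daisy graph, every closed arc has an even number of edges; that is, every closed arc has even length. -/
import Mathlib


/-!
Model of a daisy graph (DG): finite vertex set `V`, finite edge set `E`, darts
`D = E × Bool` with an endpoint map.  Every vertex has degree 1 or 6; at each
degree-6 vertex ("triple value") the six darts are partitioned into three
unordered pairs ("consecutive pairs"), encoded by a fixed-point-free
endpoint-preserving involution `mate` on the darts at that vertex.
An arrowed daisy graph (ADG) additionally selects, in each consecutive pair,
exactly one preferred dart (`pref`).
-/
structure ADG (V E : Type) [Fintype V] [DecidableEq V] [Fintype E] where
  /-- the endpoint of each dart -/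
  endpoint : E × Bool → V
  /-- the other dart of the consecutive pair of a dart (at triple values) -/
  mate : E × Bool → E × Bool
  /-- the preferred-dart choice: `pref d = true` means `d` is preferred -/
  pref : E × Bool → Bool
  /-- every vertex has degree 1 or 6 -/
  degree_cond : ∀ w : V,
      (Finset.univ.filter fun d : E × Bool => endpoint d = w).card = 1 ∨
      (Finset.univ.filter fun d : E × Bool => endpoint d = w).card = 6
  mate_endpoint : ∀ d, endpoint (mate d) = endpoint d
  mate_invol : ∀ d, mate (mate d) = d
  /-- at a triple value, `mate` is fixed-point free: it pairs the six darts
  into three consecutive pairs -/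
  mate_ne : ∀ d, (Finset.univ.filter fun d' : E × Bool =>
      endpoint d' = endpoint d).card = 6 → mate d ≠ d
  /-- at a degree-1 vertex there are no consecutive pairs -/
  mate_fix : ∀ d, (Finset.univ.filter fun d' : E × Bool =>
      endpoint d' = endpoint d).card = 1 → mate d = d
  /-- in each consecutive pair exactly one dart is preferred -/
  pref_pair : ∀ d, (Finset.univ.filter fun d' : E × Bool =>
      endpoint d' = endpoint d).card = 6 → pref d = !pref (mate d)

variable {V E : Type} [Fintype V] [DecidableEq V] [Fintype E]

/-- A triple value is a vertex of degree 6. -/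
def ADG.IsTriple (G : ADG V E) (w : V) : Prop :=
  (Finset.univ.filter fun d : E × Bool => G.endpoint d = w).card = 6

/-- The edge `e` is preferred at the vertex `w`: some dart of `e` with
endpoint `w` is preferred. -/
def ADG.PreferredAt (G : ADG V E) (e : E) (w : V) : Prop :=
  ∃ b : Bool, G.endpoint (e, b) = w ∧ G.pref (e, b) = true

/-- The edge `e` is non-preferred at the vertex `w`: some dart of `e` with
endpoint `w` is not preferred. -/
def ADG.NonPreferredAt (G : ADG V E) (e : E) (w : V) : Prop :=
  ∃ b : Bool, G.endpoint (e, b) = w ∧ G.pref (e, b) = false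

/-- A grading: at each triple value `w` there is `a(w) : ℤ` with the preferred
edges at `w` graded `a(w) + 1` and the non-preferred ones graded `a(w)`. -/
def ADG.IsGrading (G : ADG V E) (g : E → ℤ) : Prop :=
  ∀ w : V, G.IsTriple w → ∃ a : ℤ,
    (∀ e : E, G.PreferredAt e w → g e = a + 1) ∧
    (∀ e : E, G.NonPreferredAt e w → g e = a)

/-- A grade-obstructing loop: an edge whose two darts have the same endpoint,
one dart preferred and the other non-preferred. -/
def ADG.GradeObstructingLoop (G : ADG V E) (e : E) : Prop :=
  ∃ w : V, G.endpoint (e, false) = w ∧ G.endpoint (e, true) = w ∧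
    G.pref (e, false) ≠ G.pref (e, true)

/-- The other dart of the same edge. -/
def flipDart (d : E × Bool) : E × Bool := (d.1, !d.2)

/-- Two darts are consecutive: they form a consecutive pair at a triple
value. -/
def ADG.Consecutive (G : ADG V E) (d d' : E × Bool) : Prop :=
  G.IsTriple (G.endpoint d) ∧ G.mate d = d'

/-- A closed arc of length `r ≥ 1`: a cyclic sequence of pairwise distinct
darts `d₁, d₁', d₂, d₂', …, d_r, d_r'` where `d_k` and `d_k' = flipDart d_k`
are the two darts of a single edge and `d_k'` is consecutive to `d_{k+1}`
(indices mod `r`).  Here `a k = d_{k+1}`, and pairwise distinctness of all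
`2r` darts is equivalent to the edges being pairwise distinct. -/
def ADG.IsClosedArc (G : ADG V E) (r : ℕ) (a : ℕ → E × Bool) : Prop :=
  1 ≤ r ∧
  (∀ j k : ℕ, j < r → k < r → j ≠ k → (a j).1 ≠ (a k).1) ∧
  (∀ k : ℕ, k < r → G.Consecutive (flipDart (a k)) (a ((k + 1) % r)))

/-- In a gradable arrowed daisy graph, every closed arc has an
even number of edges. -/
theorem closedArc_even_of_gradable (G : ADG V E)
    (h : ∃ g : E → ℤ, G.IsGrading g)
    (r : ℕ) (a : ℕ → E × Bool) (ha : G.IsClosedArc r a) : Even r := by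
  obtain ⟨g, hg⟩ := h
  obtain ⟨hr, -, hcons⟩ := ha
  have key : ∀ k, k < r → Odd (g (a ((k + 1) % r)).1 - g (a k).1) := by
    intro k hk
    obtain ⟨htr, hm⟩ := hcons k hk
    set d := flipDart (a k) with hd
    set w := G.endpoint d with hw
    obtain ⟨A, h1, h2⟩ := hg w htr
    have hpair : G.pref (G.mate d) = !G.pref d := by
      rw [G.pref_pair d htr, Bool.not_not]
    have hep : G.endpoint (a ((k + 1) % r)) = w := by
      rw [← hm, G.mate_endpoint]
    have hepd : G.endpoint ((a k).1, !(a k).2) = w := rfl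
    have hprefm : G.pref (a ((k + 1) % r)) = !G.pref d := by
      rw [← hm, hpair]
    cases hpref : G.pref d with
    | true =>
        have hP : G.PreferredAt (a k).1 w := ⟨!(a k).2, hepd, hpref⟩
        have hN : G.NonPreferredAt (a ((k + 1) % r)).1 w := by
          refine ⟨(a ((k + 1) % r)).2, ?_, ?_⟩
          · rw [Prod.mk.eta]; exact hep
          · rw [Prod.mk.eta, hprefm, hpref]; rfl
        have e1 := h1 _ hP
        have e2 := h2 _ hN
        rw [Int.odd_iff]; omega
    | false =>
        have hN : G.NonPreferredAt (a k).1 w := ⟨!(a k).2, hepd, hpref⟩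
        have hP : G.PreferredAt (a ((k + 1) % r)).1 w := by
          refine ⟨(a ((k + 1) % r)).2, ?_, ?_⟩
          · rw [Prod.mk.eta]; exact hep
          · rw [Prod.mk.eta, hprefm, hpref]; rfl
        have e1 := h1 _ hP
        have e2 := h2 _ hN
        rw [Int.odd_iff]; omega
  have hsum : ∑ k ∈ Finset.range r, (g (a ((k + 1) % r)).1 - g (a k).1) = 0 := by
    rw [Finset.sum_sub_distrib]
    obtain ⟨m, rfl⟩ : ∃ m, r = m + 1 := ⟨r - 1, by omega⟩
    rw [Finset.sum_range_succ, Finset.sum_range_succ' (fun k => g (a k).1)]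
    rw [Nat.mod_self]
    have hco : ∀ k ∈ Finset.range m,
        g (a ((k + 1) % (m + 1))).1 = g (a (k + 1)).1 := by
      intro k hk
      rw [Nat.mod_eq_of_lt (by simpa using Nat.succ_lt_succ (Finset.mem_range.mp hk))]
    rw [Finset.sum_congr rfl hco]
    ring
  have hmod : (0 : ℤ) % 2 =
      (∑ k ∈ Finset.range r, ((g (a ((k + 1) % r)).1 - g (a k).1) % 2)) % 2 := by
    rw [← hsum]; exact Finset.sum_int_mod _ _ _
  have hones : ∑ k ∈ Finset.range r,
      ((g (a ((k + 1) % r)).1 - g (a k).1) % 2) = (r : ℤ) := by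
    rw [Finset.sum_congr rfl
      (fun k hk => Int.odd_iff.mp (key k (Finset.mem_range.mp hk)))]
    simp
  rw [hones] at hmod
  have : Even (r : ℤ) := Int.even_iff.mpr hmod.symm
  exact Int.even_coe_nat r |>.mp this
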